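/- Second conditional-entropy estimate: let κ = (κ_1,…,κ_L) with L ≥ 2, and suppose that for each ℓ ∈ [L], σ_ℓ ≥ 0 is a valid log-Sobolev constant for the two-color multislice with parameter (κ_ℓ, n−κ_ℓ). Then for every f : Ω_κ → [0,∞), Σ_{ℓ=1}^{L} (1 − κ_ℓ/n)·Ent_κ(E[f | ξ_ℓ]) ≤ max_{ℓ∈[L]} { 2(1 − κ_ℓ/n)·σ_ℓ } · 𝔈_κ(√f, √f), where E[f | ξ_ℓ] denotes the function ω ↦ (average of f over {ω' ∈ Ω_κ : ξ_ℓ(ω') = ξ_ℓ(ω)}). -/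

import Mathlib

/-!
Write `E[f | ξ_ℓ] = g_ℓ ∘ collapse ℓ`, where `collapse ℓ : Ω_κ → Ω_(κ_ℓ, n - κ_ℓ)` recolors `ℓ` as `0`
and every other color as `1`, and `g_ℓ τ` is the average of `f` over the fiber of `τ`. Coordinate
permutations act transitively on the two-color slice and permute the fibers, so all fibers have the
same size and `Ent_κ (E[f | ξ_ℓ]) = Ent (g_ℓ) ≤ σ_ℓ 𝔈(√g_ℓ, √g_ℓ)`. On each fiber the reverse
triangle inequality `(√(E a) - √(E b))² ≤ E (√a - √b)²` bounds the gradient of `√g_ℓ` by that of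
`√f` along the transpositions `(i j)` that move `ξ_ℓ`. Such a transposition moves `ξ_ℓ` only for
`ℓ ∈ {ω i, ω j}`, so after weighting by `(1 - κ_ℓ / n) σ_ℓ` and summing over `ℓ` each term of
`𝔈(√f, √f)` is counted at most twice, with weight at most `max_ℓ (1 - κ_ℓ / n) σ_ℓ`.
-/

open Finset

namespace Multislice

/-- The multislice `Ω_κ`: sequences of length `n` with values in `Fin L`
in which color `ℓ` appears exactly `κ ℓ` times. -/
def slice (L n : ℕ) (κ : Fin L → ℕ) : Finset (Fin n → Fin L) :=
  Finset.univ.filter fun ω => ∀ ℓ, (Finset.univ.filter fun i => ω i = ℓ).card = κ ℓ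

/-- Average of `f` with respect to the uniform distribution on `Ω`. -/
noncomputable def expect {L n : ℕ} (Ω : Finset (Fin n → Fin L))
    (f : (Fin n → Fin L) → ℝ) : ℝ :=
  (∑ ω ∈ Ω, f ω) / Ω.card

/-- Discrete gradient `(∇^{ij} f)(ω) = f(ω^{ij}) - f(ω)`. -/
noncomputable def grad {L n : ℕ} (i j : Fin n) (f : (Fin n → Fin L) → ℝ)
    (ω : Fin n → Fin L) : ℝ :=
  f (ω ∘ Equiv.swap i j) - f ω

/-- The Dirichlet form `𝔈_κ(f,g) = (1/(2n)) Σ_{i<j} E[(∇^{ij}f)(∇^{ij}g)]`. -/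
noncomputable def dirichlet {L n : ℕ} (Ω : Finset (Fin n → Fin L))
    (f g : (Fin n → Fin L) → ℝ) : ℝ :=
  (1 / (2 * (n : ℝ))) *
    ∑ p ∈ Finset.univ.filter (fun p : Fin n × Fin n => p.1 < p.2),
      expect Ω fun ω => grad p.1 p.2 f ω * grad p.1 p.2 g ω

/-- The weighted Dirichlet form `𝔈^G_κ(f,g) = (1/2) Σ_{i<j} G_{ij} E[(∇^{ij}f)(∇^{ij}g)]`. -/
noncomputable def wDirichlet {L n : ℕ} (G : Fin n → Fin n → ℝ)
    (Ω : Finset (Fin n → Fin L)) (f g : (Fin n → Fin L) → ℝ) : ℝ :=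
  (1 / 2) *
    ∑ p ∈ Finset.univ.filter (fun p : Fin n × Fin n => p.1 < p.2),
      G p.1 p.2 * expect Ω fun ω => grad p.1 p.2 f ω * grad p.1 p.2 g ω

/-- Entropy `Ent(f) = E[f log f] - E[f] log E[f]` (note `Real.log 0 = 0`). -/
noncomputable def entropy {L n : ℕ} (Ω : Finset (Fin n → Fin L))
    (f : (Fin n → Fin L) → ℝ) : ℝ :=
  expect Ω (fun ω => f ω * Real.log (f ω)) - expect Ω f * Real.log (expect Ω f)

/-- Variance `Var(f) = E[f²] - (E[f])²`. -/
noncomputable def variance {L n : ℕ} (Ω : Finset (Fin n → Fin L))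
    (f : (Fin n → Fin L) → ℝ) : ℝ :=
  expect Ω (fun ω => f ω ^ 2) - (expect Ω f) ^ 2

/-- The edge boundary `∂A` of `A ⊆ Ω`: edges (recorded as pairs with first endpoint
in `A` and second endpoint in `Ω \ A`) between `A` and its complement, where two
states are adjacent when they differ in exactly two coordinates. -/
def edgeBoundary {L n : ℕ} (Ω A : Finset (Fin n → Fin L)) :
    Finset ((Fin n → Fin L) × (Fin n → Fin L)) :=
  (A ×ˢ (Ω \ A)).filter fun p => (Finset.univ.filter fun i => p.1 i ≠ p.2 i).card = 2

/-- The `ℓ`-colored region `ξ_ℓ(ω) = {i : ω i = ℓ}`. -/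
def xi {L n : ℕ} (ℓ : Fin L) (ω : Fin n → Fin L) : Finset (Fin n) :=
  Finset.univ.filter fun i => ω i = ℓ

/-- The parameter `κ^{∖ℓ}` obtained from `κ` by removing the `ℓ`-th entry. -/
def removeIdx {L : ℕ} (κ : Fin L → ℕ) (ℓ : Fin L) (m : Fin (L - 1)) : ℕ :=
  if (m : ℕ) < (ℓ : ℕ) then κ ⟨m, by have := m.isLt; omega⟩
  else κ ⟨(m : ℕ) + 1, by have := m.isLt; omega⟩

open scoped BigOperators

section Fiberwise

variable {α β M : Type*} [AddCommMonoid M] [Module ℚ≥0 M] [DecidableEq β]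
  {s : Finset α} {t : Finset β} {p : α → β} {c : ℕ}

theorem _root_.Finset.expect_fiberwise_of_card_fiber_eq (hp : ∀ a ∈ s, p a ∈ t)
    (hc : ∀ b ∈ t, #{a ∈ s | p a = b} = c) (G : α → M) :
    𝔼 b ∈ t, 𝔼 a ∈ s with p a = b, G a = 𝔼 a ∈ s, G a := by
  have hs : #s = #t * c := by
    rw [card_eq_sum_card_fiberwise hp, sum_congr rfl hc, sum_const, smul_eq_mul]
  simp only [Finset.expect]
  rw [sum_congr rfl fun b hb => by rw [hc b hb], ← smul_sum, sum_fiberwise_of_maps_to hp, hs,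
    Nat.cast_mul, mul_inv, mul_smul]

theorem _root_.Finset.expect_comp_of_card_fiber_eq (hp : ∀ a ∈ s, p a ∈ t) (hc0 : 0 < c)
    (hc : ∀ b ∈ t, #{a ∈ s | p a = b} = c) (F : β → M) :
    𝔼 a ∈ s, F (p a) = 𝔼 b ∈ t, F b := by
  rw [← expect_fiberwise_of_card_fiber_eq hp hc]
  refine expect_congr rfl fun b hb => ?_
  have hne : ({a ∈ s | p a = b} : Finset α).Nonempty := card_pos.1 (hc b hb ▸ hc0)
  rw [expect_congr rfl fun a ha => by rw [(mem_filter.1 ha).2], expect_const hne]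

end Fiberwise

theorem _root_.Real.sq_sqrt_expect_sub_sqrt_expect_le {ι : Type*} {s : Finset ι} {a b : ι → ℝ}
    (ha : ∀ i ∈ s, 0 ≤ a i) (hb : ∀ i ∈ s, 0 ≤ b i) :
    (√(𝔼 i ∈ s, a i) - √(𝔼 i ∈ s, b i)) ^ 2 ≤ 𝔼 i ∈ s, (√(a i) - √(b i)) ^ 2 := by
  have hA := expect_nonneg ha
  have hB := expect_nonneg hb
  have cauchySchwarz : 𝔼 i ∈ s, √(a i) * √(b i) ≤ √(𝔼 i ∈ s, a i) * √(𝔼 i ∈ s, b i) := by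
    rw [← Real.sqrt_mul hA]
    refine Real.le_sqrt_of_sq_le ((expect_mul_sq_le_sq_mul_sq s _ _).trans_eq ?_)
    rw [expect_congr rfl fun i hi => Real.sq_sqrt (ha i hi),
      expect_congr rfl fun i hi => Real.sq_sqrt (hb i hi)]
  have expand : 𝔼 i ∈ s, (√(a i) - √(b i)) ^ 2
      = 𝔼 i ∈ s, a i + 𝔼 i ∈ s, b i - 2 * 𝔼 i ∈ s, √(a i) * √(b i) := by
    rw [mul_expect, ← expect_add_distrib, ← expect_sub_distrib]
    refine expect_congr rfl fun i hi => ?_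
    nlinarith [Real.sq_sqrt (ha i hi), Real.sq_sqrt (hb i hi)]
  rw [expand]
  nlinarith [Real.sq_sqrt hA, Real.sq_sqrt hB]

variable {L n : ℕ} {κ : Fin L → ℕ} {ℓ : Fin L}

theorem expect_eq_finsetExpect (Ω : Finset (Fin n → Fin L)) (f : (Fin n → Fin L) → ℝ) :
    expect Ω f = 𝔼 ω ∈ Ω, f ω :=
  (expect_eq_sum_div_card Ω f).symm

theorem mem_slice {ω : Fin n → Fin L} :
    ω ∈ slice L n κ ↔ ∀ ℓ, #{i | ω i = ℓ} = κ ℓ := by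
  simp [slice]

theorem le_of_mem_slice {ω : Fin n → Fin L} (hω : ω ∈ slice L n κ) (ℓ : Fin L) : κ ℓ ≤ n := by
  simpa [mem_slice.1 hω ℓ] using card_filter_le (univ : Finset (Fin n)) (ω · = ℓ)

theorem comp_perm_mem_slice_iff {ω : Fin n → Fin L} (e : Equiv.Perm (Fin n)) :
    ω ∘ e ∈ slice L n κ ↔ ω ∈ slice L n κ := by
  have : ∀ ℓ, #{i | ω (e i) = ℓ} = #{i | ω i = ℓ} := fun ℓ => by
    simp only [← Fintype.card_subtype]
    exact Fintype.card_congr (e.subtypeEquiv fun _ => Iff.rfl)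
  simp only [mem_slice, Function.comp_apply, this]

theorem exists_perm_comp_eq_of_mem_slice {ω ω' : Fin n → Fin L} (hω : ω ∈ slice L n κ)
    (hω' : ω' ∈ slice L n κ) : ∃ e : Equiv.Perm (Fin n), ω' ∘ e = ω := by
  have h : ∀ ℓ, Fintype.card {i // ω i = ℓ} = Fintype.card {i // ω' i = ℓ} := fun ℓ => by
    rw [Fintype.card_subtype, Fintype.card_subtype, mem_slice.1 hω, mem_slice.1 hω']
  exact ⟨Equiv.ofFiberEquiv fun ℓ => Fintype.equivOfCardEq (h ℓ),
    funext (Equiv.ofFiberEquiv_map _)⟩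

def collapse (ℓ : Fin L) (ω : Fin n → Fin L) : Fin n → Fin 2 :=
  fun i => if ω i = ℓ then 0 else 1

theorem collapse_eq_zero_iff {ω : Fin n → Fin L} {i : Fin n} : collapse ℓ ω i = 0 ↔ ω i = ℓ := by
  unfold collapse; split_ifs <;> simp [*]

theorem collapse_eq_one_iff {ω : Fin n → Fin L} {i : Fin n} : collapse ℓ ω i = 1 ↔ ω i ≠ ℓ := by
  unfold collapse; split_ifs <;> simp [*]

theorem collapse_apply_eq_iff {ω ω' : Fin n → Fin L} {i j : Fin n} :
    collapse ℓ ω' i = collapse ℓ ω j ↔ (ω' i = ℓ ↔ ω j = ℓ) := by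
  unfold collapse; split_ifs <;> simp [*]

theorem collapse_eq_collapse_iff {ω ω' : Fin n → Fin L} :
    collapse ℓ ω' = collapse ℓ ω ↔ xi ℓ ω' = xi ℓ ω := by
  simp only [funext_iff, Finset.ext_iff, xi, mem_filter, mem_univ, true_and,
    collapse_apply_eq_iff]

theorem collapse_mem_slice {ω : Fin n → Fin L} (hω : ω ∈ slice L n κ) :
    collapse ℓ ω ∈ slice 2 n ![κ ℓ, n - κ ℓ] := by
  have hsplit := card_filter_add_card_filter_not (s := (univ : Finset (Fin n))) (ω · = ℓ)
  rw [card_univ, Fintype.card_fin, mem_slice.1 hω] at hsplit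
  rw [mem_slice, Fin.forall_fin_two]
  simp only [collapse_eq_zero_iff, collapse_eq_one_iff, mem_slice.1 hω, ne_eq,
    Matrix.cons_val_zero, Matrix.cons_val_one, Matrix.cons_val_fin_one, true_and]
  omega

theorem collapse_comp (ω : Fin n → Fin L) (e : Fin n → Fin n) :
    collapse ℓ (ω ∘ e) = collapse ℓ ω ∘ e :=
  rfl

def fiber (κ : Fin L → ℕ) (ℓ : Fin L) (τ : Fin n → Fin 2) : Finset (Fin n → Fin L) :=
  {ω ∈ slice L n κ | collapse ℓ ω = τ}

theorem mem_fiber_comp_perm_iff {ω : Fin n → Fin L} {τ : Fin n → Fin 2} (e : Equiv.Perm (Fin n)) :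
    ω ∈ fiber κ ℓ (τ ∘ e) ↔ ω ∘ e.symm ∈ fiber κ ℓ τ := by
  have : collapse ℓ ω ∘ e.symm = τ ↔ collapse ℓ ω = τ ∘ e := Equiv.comp_symm_eq e _ _
  simp only [fiber, mem_filter, comp_perm_mem_slice_iff, collapse_comp, this]

theorem comp_perm_mem_fiber {ω : Fin n → Fin L} {τ : Fin n → Fin 2} (e : Equiv.Perm (Fin n))
    (hω : ω ∈ fiber κ ℓ τ) : ω ∘ e ∈ fiber κ ℓ (τ ∘ e) := by
  rwa [mem_fiber_comp_perm_iff, Function.comp_assoc, e.self_comp_symm, Function.comp_id]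

theorem expect_fiber_comp_perm (τ : Fin n → Fin 2) (e : Equiv.Perm (Fin n))
    (F : (Fin n → Fin L) → ℝ) :
    𝔼 ω ∈ fiber κ ℓ (τ ∘ e), F ω = 𝔼 ω ∈ fiber κ ℓ τ, F (ω ∘ e) :=
  (expect_nbij' (· ∘ e) (· ∘ e.symm) (fun _ => comp_perm_mem_fiber e)
    (fun ω hω => (mem_fiber_comp_perm_iff e).1 hω) (fun ω _ => by simp [Function.comp_assoc])
    (fun ω _ => by simp [Function.comp_assoc]) (fun ω _ => rfl)).symm

theorem card_fiber_comp_perm (τ : Fin n → Fin 2) (e : Equiv.Perm (Fin n)) :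
    #(fiber κ ℓ (τ ∘ e)) = #(fiber κ ℓ τ) :=
  (card_nbij' (· ∘ e) (· ∘ e.symm) (fun _ => comp_perm_mem_fiber e)
    (fun ω hω => (mem_fiber_comp_perm_iff e).1 hω) (fun ω _ => by simp [Function.comp_assoc])
    (fun ω _ => by simp [Function.comp_assoc])).symm

theorem exists_card_fiber_eq (hΩ : (slice L n κ).Nonempty) (ℓ : Fin L) :
    ∃ c, 0 < c ∧ ∀ τ ∈ slice 2 n ![κ ℓ, n - κ ℓ], #(fiber κ ℓ τ) = c := by
  obtain ⟨ω₀, hω₀⟩ := hΩ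
  refine ⟨#(fiber κ ℓ (collapse ℓ ω₀)), card_pos.2 ⟨ω₀, mem_filter.2 ⟨hω₀, rfl⟩⟩, fun τ hτ => ?_⟩
  obtain ⟨e, rfl⟩ := exists_perm_comp_eq_of_mem_slice hτ (collapse_mem_slice hω₀)
  exact card_fiber_comp_perm _ e

theorem entropy_comp_collapse (hΩ : (slice L n κ).Nonempty) (F : (Fin n → Fin 2) → ℝ) :
    entropy (slice L n κ) (fun ω => F (collapse ℓ ω)) = entropy (slice 2 n ![κ ℓ, n - κ ℓ]) F := by
  obtain ⟨c, hc0, hc⟩ := exists_card_fiber_eq hΩ ℓ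
  have transfer (G : (Fin n → Fin 2) → ℝ) :
      expect (slice L n κ) (fun ω => G (collapse ℓ ω)) = expect (slice 2 n ![κ ℓ, n - κ ℓ]) G := by
    simp only [expect_eq_finsetExpect]
    exact expect_comp_of_card_fiber_eq (fun ω => collapse_mem_slice) hc0 hc G
  rw [entropy, entropy, transfer F, transfer fun τ => F τ * Real.log (F τ)]

noncomputable def fiberExpect (κ : Fin L → ℕ) (ℓ : Fin L) (f : (Fin n → Fin L) → ℝ)
    (τ : Fin n → Fin 2) : ℝ :=
  expect (fiber κ ℓ τ) f

theorem fiberExpect_nonneg {f : (Fin n → Fin L) → ℝ} (hf : ∀ ω, 0 ≤ f ω) (τ : Fin n → Fin 2) :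
    0 ≤ fiberExpect κ ℓ f τ := by
  rw [fiberExpect, expect_eq_finsetExpect]
  exact expect_nonneg fun ω _ => hf ω

theorem expect_filter_xi_eq (f : (Fin n → Fin L) → ℝ) (ω : Fin n → Fin L) :
    expect ((slice L n κ).filter fun ω' => xi ℓ ω' = xi ℓ ω) f
      = fiberExpect κ ℓ f (collapse ℓ ω) := by
  rw [fiberExpect, fiber, filter_congr fun ω' _ => collapse_eq_collapse_iff.symm]

noncomputable def colorDirichlet (ℓ : Fin L) (Ω : Finset (Fin n → Fin L))
    (f : (Fin n → Fin L) → ℝ) : ℝ :=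
  (1 / (2 * (n : ℝ))) *
    ∑ p ∈ Finset.univ.filter (fun p : Fin n × Fin n => p.1 < p.2),
      expect Ω fun ω =>
        if (ω p.1 = ℓ ↔ ω p.2 = ℓ) then 0 else grad p.1 p.2 f ω * grad p.1 p.2 f ω

theorem grad_sqrt_fiberExpect_sq_le {f : (Fin n → Fin L) → ℝ} (hf : ∀ ω, 0 ≤ f ω) (i j : Fin n)
    (τ : Fin n → Fin 2) :
    grad i j (fun τ => √(fiberExpect κ ℓ f τ)) τ * grad i j (fun τ => √(fiberExpect κ ℓ f τ)) τ ≤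
      𝔼 ω ∈ fiber κ ℓ τ, if (ω i = ℓ ↔ ω j = ℓ) then 0
        else grad i j (fun ω => √(f ω)) ω * grad i j (fun ω => √(f ω)) ω := by
  by_cases hτ : τ i = τ j
  · have hfix : τ ∘ Equiv.swap i j = τ := funext (Equiv.apply_swap_eq_self hτ)
    simp only [grad, hfix, sub_self, mul_zero]
    exact expect_nonneg fun ω _ => by split_ifs <;> [exact le_rfl; exact mul_self_nonneg _]
  · have hcross : ∀ ω ∈ fiber κ ℓ τ, ¬(ω i = ℓ ↔ ω j = ℓ) := fun ω hω h => by
      obtain ⟨-, rfl⟩ := mem_filter.1 hω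
      exact hτ (collapse_apply_eq_iff.2 h)
    rw [expect_congr rfl fun ω hω => if_neg (hcross ω hω)]
    simp only [grad, fiberExpect, expect_eq_finsetExpect, expect_fiber_comp_perm, ← sq]
    exact Real.sq_sqrt_expect_sub_sqrt_expect_le (fun ω _ => hf _) (fun ω _ => hf _)

theorem dirichlet_sqrt_fiberExpect_le (hΩ : (slice L n κ).Nonempty) {f : (Fin n → Fin L) → ℝ}
    (hf : ∀ ω, 0 ≤ f ω) :
    dirichlet (slice 2 n ![κ ℓ, n - κ ℓ])
        (fun τ => √(fiberExpect κ ℓ f τ)) (fun τ => √(fiberExpect κ ℓ f τ)) ≤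
      colorDirichlet ℓ (slice L n κ) (fun ω => √(f ω)) := by
  obtain ⟨c, -, hc⟩ := exists_card_fiber_eq hΩ ℓ
  unfold dirichlet colorDirichlet
  gcongr with p
  simp only [expect_eq_finsetExpect]
  rw [← expect_fiberwise_of_card_fiber_eq (fun ω => collapse_mem_slice) hc]
  gcongr with τ
  exact grad_sqrt_fiberExpect_sq_le hf p.1 p.2 τ

theorem sum_mul_ite_iff_le {w : Fin L → ℝ} {M : ℝ} (hM : 0 ≤ M) (hw : ∀ ℓ, 2 * w ℓ ≤ M)
    (a b : Fin L) {z : ℝ} (hz : 0 ≤ z) :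
    ∑ ℓ, w ℓ * (if (a = ℓ ↔ b = ℓ) then 0 else z) ≤ M * z := by
  by_cases hab : a = b
  · simp only [hab, iff_self, if_true, mul_zero, sum_const_zero]
    positivity
  have split (ℓ : Fin L) :
      (if (a = ℓ ↔ b = ℓ) then 0 else z) = (if a = ℓ then z else 0) + (if b = ℓ then z else 0) := by
    by_cases ha : a = ℓ <;> by_cases hb : b = ℓ <;> simp_all
  simp only [split, mul_add, sum_add_distrib, mul_ite, mul_zero, sum_ite_eq, mem_univ, if_true]
  nlinarith [hw a, hw b]

theorem sum_mul_colorDirichlet_le (Ω : Finset (Fin n → Fin L)) (f : (Fin n → Fin L) → ℝ)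
    {w : Fin L → ℝ} {M : ℝ} (hM : 0 ≤ M) (hw : ∀ ℓ, 2 * w ℓ ≤ M) :
    ∑ ℓ, w ℓ * colorDirichlet ℓ Ω f ≤ M * dirichlet Ω f f := by
  simp only [colorDirichlet, dirichlet, expect_eq_finsetExpect]
  calc _ = 1 / (2 * (n : ℝ)) * ∑ p ∈ univ.filter (fun p : Fin n × Fin n => p.1 < p.2),
          𝔼 ω ∈ Ω, ∑ ℓ, w ℓ * (if (ω p.1 = ℓ ↔ ω p.2 = ℓ) then 0
            else grad p.1 p.2 f ω * grad p.1 p.2 f ω) := by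
        simp only [expect_sum_comm, ← mul_expect, mul_sum]
        rw [sum_comm]
        refine sum_congr rfl fun ℓ _ => sum_congr rfl fun p _ => by ring
    _ ≤ 1 / (2 * (n : ℝ)) * ∑ p ∈ univ.filter (fun p : Fin n × Fin n => p.1 < p.2),
          𝔼 ω ∈ Ω, M * (grad p.1 p.2 f ω * grad p.1 p.2 f ω) := by
        gcongr with p _ ω
        exact sum_mul_ite_iff_le hM hw _ _ (mul_self_nonneg _)
    _ = _ := by
        simp only [← mul_expect, mul_sum]
        refine sum_congr rfl fun p _ => by ring

theorem entropy_condExpect_xi_le (hΩ : (slice L n κ).Nonempty) {σ : ℝ} (hσ0 : 0 ≤ σ)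
    (hσ : ∀ g : (Fin n → Fin 2) → ℝ, (∀ τ, 0 ≤ g τ) →
      entropy (slice 2 n ![κ ℓ, n - κ ℓ]) g ≤
        σ * dirichlet (slice 2 n ![κ ℓ, n - κ ℓ]) (fun τ => √(g τ)) (fun τ => √(g τ)))
    {f : (Fin n → Fin L) → ℝ} (hf : ∀ ω, 0 ≤ f ω) :
    entropy (slice L n κ) (fun ω => expect ((slice L n κ).filter fun ω' => xi ℓ ω' = xi ℓ ω) f) ≤
      σ * colorDirichlet ℓ (slice L n κ) (fun ω => √(f ω)) := by
  simp only [expect_filter_xi_eq, entropy_comp_collapse hΩ]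
  calc _ ≤ _ := hσ _ (fiberExpect_nonneg hf)
    _ ≤ _ := by gcongr; exact dirichlet_sqrt_fiberExpect_le hΩ hf

/-- second conditional-entropy estimate (bound on
`Σ_ℓ (1-κ_ℓ/n) Ent(E[f|ξ_ℓ])`). -/
theorem multislice_second_estimate
    (L : ℕ) (hL : 2 ≤ L) (κ : Fin L → ℕ)
    (n : ℕ)
    (σ : Fin L → ℝ) (hσ0 : ∀ ℓ, 0 ≤ σ ℓ)
    (hσ : ∀ ℓ, ∀ g : (Fin n → Fin 2) → ℝ, (∀ ω, 0 ≤ g ω) →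
      entropy (slice 2 n ![κ ℓ, n - κ ℓ]) g ≤
        σ ℓ * dirichlet (slice 2 n ![κ ℓ, n - κ ℓ])
          (fun ω => Real.sqrt (g ω)) (fun ω => Real.sqrt (g ω)))
    (f : (Fin n → Fin L) → ℝ) (hf : ∀ ω, 0 ≤ f ω) :
    ∑ ℓ : Fin L, (1 - (κ ℓ : ℝ) / (n : ℝ)) *
      entropy (slice L n κ)
        (fun ω => expect ((slice L n κ).filter fun ω' => xi ℓ ω' = xi ℓ ω) f) ≤
      (Finset.univ.sup' ⟨⟨0, by omega⟩, Finset.mem_univ _⟩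
          (fun ℓ => 2 * (1 - (κ ℓ : ℝ) / (n : ℝ)) * σ ℓ)) *
        dirichlet (slice L n κ) (fun ω => Real.sqrt (f ω)) (fun ω => Real.sqrt (f ω)) := by
  rcases (slice L n κ).eq_empty_or_nonempty with hΩ | hΩ
  · -- every average over the empty slice is `0 / 0 = 0`
    simp [hΩ, entropy, dirichlet, expect]
  have ht (ℓ : Fin L) : 0 ≤ 1 - (κ ℓ : ℝ) / n :=
    sub_nonneg.2 (div_le_one_of_le₀ (by exact_mod_cast le_of_mem_slice hΩ.choose_spec ℓ)
      n.cast_nonneg)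
  have hM (ℓ : Fin L) : 2 * (1 - (κ ℓ : ℝ) / n) * σ ℓ ≤
      univ.sup' ⟨⟨0, by omega⟩, mem_univ _⟩ (fun ℓ => 2 * (1 - (κ ℓ : ℝ) / n) * σ ℓ) :=
    le_sup' (fun ℓ => 2 * (1 - (κ ℓ : ℝ) / n) * σ ℓ) (mem_univ ℓ)
  calc _ ≤ ∑ ℓ, (1 - (κ ℓ : ℝ) / n) * σ ℓ * colorDirichlet ℓ (slice L n κ) fun ω => √(f ω) :=
        sum_le_sum fun ℓ _ => by
          rw [mul_assoc]
          exact mul_le_mul_of_nonneg_left (entropy_condExpect_xi_le hΩ (hσ0 ℓ) (hσ ℓ) hf) (ht ℓ)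
    _ ≤ _ := sum_mul_colorDirichlet_le _ _
        ((mul_nonneg (mul_nonneg zero_le_two (ht _)) (hσ0 _)).trans (hM ⟨0, by omega⟩))
        fun ℓ => by linarith [hM ℓ]

end Multislice
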